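/- arXiv:2407.20366 — 2 statements merged into one kernel-verified Lean document; each statement's English description precedes it below -/
import Mathlib

section
/- Let T > 0, let η : ℝ → ℝ be bounded with |η|_∞ its supremum norm, and let μ ≥ 1. Define α(t,x) = (e^{μη(x)} − e^{2μ|η|_∞})/(t(T−t)) and φ(t,x) = e^{μη(x)}/(t(T−t)) on (0,T) × ℝ. Then there exists C > 0 depending only on T such that |∂_t α(t,x)| ≤ C e^{2μ|η|_∞} φ(t,x)² and |∂_{tt} α(t,x)| ≤ C e^{2μ|η|_∞} φ(t,x)³ for all (t,x) ∈ (0,T) × ℝ. -/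
/-!
With `K = e^{μη} - e^{2μm}` and `g = t(T - t)`, the quotient rule gives
`∂ₜα = K(2t - T)/g²` and `∂ₜₜα = 2K(g + (T - 2t)²)/g³`. Now `|K| ≤ e^{2μm}`, `|2t - T| ≤ T` and
`g + (T - 2t)² ≤ T²`, while `e^{μη} ≥ e^{-μm}` gives `1 ≤ e^{nμm} (e^{μη})ⁿ`, which converts the
missing powers of `e^{μη}` into powers of `e^{μm}`; hence `C = T e^{2μm} + 2T² e^{3μm}` works.
-/

open Set Real

section Derivatives

variable (K T : ℝ) {t : ℝ}

theorem hasDerivAt_mul_sub : HasDerivAt (fun s => s * (T - s)) (T - 2 * t) t :=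
  ((hasDerivAt_id' t).mul ((hasDerivAt_id' t).const_sub T)).congr_deriv (by ring)

theorem hasDerivAt_div_mul_sub (ht : t * (T - t) ≠ 0) :
    HasDerivAt (fun s => K / (s * (T - s))) (K * (2 * t - T) / (t * (T - t)) ^ 2) t :=
  ((hasDerivAt_const t K).div (hasDerivAt_mul_sub T) ht).congr_deriv (by ring)

theorem hasDerivAt_mul_two_mul_sub_div_sq (ht : t * (T - t) ≠ 0) :
    HasDerivAt (fun s => K * (2 * s - T) / (s * (T - s)) ^ 2)
      (2 * K * (t * (T - t) + (T - 2 * t) ^ 2) / (t * (T - t)) ^ 3) t := by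
  obtain ⟨ht₀, hTt⟩ := mul_ne_zero_iff.1 ht
  refine ((((hasDerivAt_id' t).const_mul 2).sub_const T).const_mul K |>.div
    ((hasDerivAt_mul_sub T).fun_pow 2) (pow_ne_zero 2 ht)).congr_deriv ?_
  field_simp
  ring

theorem deriv_deriv_div_mul_sub (ht : t * (T - t) ≠ 0) :
    deriv (deriv fun s => K / (s * (T - s))) t
      = 2 * K * (t * (T - t) + (T - 2 * t) ^ 2) / (t * (T - t)) ^ 3 := by
  have hopen : IsOpen {s : ℝ | s * (T - s) ≠ 0} := isOpen_ne_fun (by fun_prop) continuous_const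
  have hfirst : deriv (fun s => K / (s * (T - s)))
      =ᶠ[nhds t] fun s => K * (2 * s - T) / (s * (T - s)) ^ 2 := by
    filter_upwards [hopen.mem_nhds ht] with s hs
    exact (hasDerivAt_div_mul_sub K T hs).deriv
  rw [hfirst.deriv_eq, (hasDerivAt_mul_two_mul_sub_div_sq K T ht).deriv]

end Derivatives

theorem abs_two_mul_sub_le {T t : ℝ} (ht : t ∈ Icc 0 T) : |2 * t - T| ≤ T := by
  rw [abs_le]
  constructor <;> linarith [ht.1, ht.2]

theorem mul_sub_add_sq_le {T t : ℝ} (ht : t ∈ Icc 0 T) : t * (T - t) + (T - 2 * t) ^ 2 ≤ T ^ 2 := by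
  nlinarith [mul_nonneg ht.1 (sub_nonneg.2 ht.2)]

section Exponentials

variable {μ m a : ℝ}

theorem one_le_exp_mul_mul_exp_pow (n : ℕ) (hμ : 0 ≤ μ) (ha : |a| ≤ m) :
    1 ≤ exp (n * μ * m) * exp (μ * a) ^ n := by
  rw [← exp_nat_mul, ← exp_add, show n * μ * m + n * (μ * a) = n * μ * (m + a) by ring]
  exact one_le_exp (mul_nonneg (mul_nonneg n.cast_nonneg hμ) (by linarith [neg_abs_le a]))

theorem abs_exp_mul_sub_exp_le (hμ : 0 ≤ μ) (ha : |a| ≤ m) :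
    |exp (μ * a) - exp (2 * μ * m)| ≤ exp (2 * μ * m) := by
  have hm : 0 ≤ m := (abs_nonneg a).trans ha
  have hexp : exp (μ * a) ≤ exp (2 * μ * m) :=
    exp_le_exp.2 (by nlinarith [le_abs_self a])
  exact abs_sub_le_of_nonneg_of_le (exp_pos _).le hexp (exp_pos _).le le_rfl

end Exponentials

section CarlemanWeight

variable {T μ m a t : ℝ}

theorem abs_deriv_carleman_weight_le (ht : t ∈ Ioo 0 T) (hμ : 0 ≤ μ) (ha : |a| ≤ m) :
    |deriv (fun s => (exp (μ * a) - exp (2 * μ * m)) / (s * (T - s))) t|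
      ≤ T * exp (2 * μ * m) * exp (2 * μ * m) * (exp (μ * a) / (t * (T - t))) ^ 2 := by
  have hg : 0 < t * (T - t) := mul_pos ht.1 (sub_pos.2 ht.2)
  have hweight := one_le_exp_mul_mul_exp_pow 2 hμ ha
  push_cast at hweight
  have hK := abs_exp_mul_sub_exp_le hμ ha
  have hT := abs_two_mul_sub_le (Ioo_subset_Icc_self ht)
  have hT₀ : 0 < T := ht.1.trans ht.2
  calc _ = |exp (μ * a) - exp (2 * μ * m)| * |2 * t - T| / (t * (T - t)) ^ 2 := by
        rw [(hasDerivAt_div_mul_sub _ T hg.ne').deriv, abs_div, abs_mul,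
          abs_of_pos (pow_pos hg 2)]
    _ ≤ exp (2 * μ * m) * T / (t * (T - t)) ^ 2 := by gcongr ?_ * ?_ / _
    _ ≤ exp (2 * μ * m) * T * (exp (2 * μ * m) * exp (μ * a) ^ 2) / (t * (T - t)) ^ 2 := by
        gcongr ?_ / _
        exact le_mul_of_one_le_right (by positivity) hweight
    _ = _ := by rw [div_pow]; ring

theorem abs_deriv_deriv_carleman_weight_le (ht : t ∈ Ioo 0 T) (hμ : 0 ≤ μ) (ha : |a| ≤ m) :
    |deriv (deriv fun s => (exp (μ * a) - exp (2 * μ * m)) / (s * (T - s))) t|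
      ≤ 2 * T ^ 2 * exp (3 * μ * m) * exp (2 * μ * m) * (exp (μ * a) / (t * (T - t))) ^ 3 := by
  have hg : 0 < t * (T - t) := mul_pos ht.1 (sub_pos.2 ht.2)
  have hweight := one_le_exp_mul_mul_exp_pow 3 hμ ha
  push_cast at hweight
  have hK := abs_exp_mul_sub_exp_le hμ ha
  have hT := mul_sub_add_sq_le (Ioo_subset_Icc_self ht)
  calc _ = 2 * |exp (μ * a) - exp (2 * μ * m)| * (t * (T - t) + (T - 2 * t) ^ 2)
        / (t * (T - t)) ^ 3 := by
        rw [deriv_deriv_div_mul_sub _ T hg.ne', abs_div, abs_mul, abs_mul, abs_two,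
          abs_of_pos (by positivity : 0 < t * (T - t) + (T - 2 * t) ^ 2), abs_of_pos (pow_pos hg 3)]
    _ ≤ 2 * exp (2 * μ * m) * T ^ 2 / (t * (T - t)) ^ 3 := by gcongr 2 * ?_ * ?_ / _
    _ ≤ 2 * exp (2 * μ * m) * T ^ 2 * (exp (3 * μ * m) * exp (μ * a) ^ 3)
        / (t * (T - t)) ^ 3 := by
        gcongr ?_ / _
        exact le_mul_of_one_le_right (by positivity) hweight
    _ = _ := by rw [div_pow]; ring

end CarlemanWeight

theorem stmt1 (T : ℝ) (hT : 0 < T) (η : ℝ → ℝ) (m : ℝ) (hηm : ∀ x, |η x| ≤ m)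
    (μ : ℝ) (hμ : 1 ≤ μ) :
    ∃ C > 0, ∀ x : ℝ, ∀ t ∈ Set.Ioo (0:ℝ) T,
      |deriv (fun s => (Real.exp (μ * η x) - Real.exp (2 * μ * m)) / (s * (T - s))) t|
        ≤ C * Real.exp (2 * μ * m) * (Real.exp (μ * η x) / (t * (T - t))) ^ 2 ∧
      |deriv (deriv (fun s => (Real.exp (μ * η x) - Real.exp (2 * μ * m)) / (s * (T - s)))) t|
        ≤ C * Real.exp (2 * μ * m) * (Real.exp (μ * η x) / (t * (T - t))) ^ 3 := by
  have hμ0 : 0 ≤ μ := zero_le_one.trans hμ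
  refine ⟨T * exp (2 * μ * m) + 2 * T ^ 2 * exp (3 * μ * m), by positivity,
    fun x t ht => ?_⟩
  have hg : 0 < t * (T - t) := mul_pos ht.1 (sub_pos.2 ht.2)
  constructor
  · refine (abs_deriv_carleman_weight_le ht hμ0 (hηm x)).trans ?_
    gcongr
    exact (le_add_iff_nonneg_right _).2 (by positivity)
  · refine (abs_deriv_deriv_carleman_weight_le ht hμ0 (hηm x)).trans ?_
    gcongr
    exact (le_add_iff_nonneg_left _).2 (by positivity)
end

section
/- Let K be a Hilbert space, ε > 0, and define F : K → ℝ by F(x) = ½‖x‖² + ε‖x − c‖ + ⟨b, x⟩ for fixed b, c ∈ K. If x* minimizes F and x* ≠ c, then for all x ∈ K: ⟨x*, x⟩ + ε⟨x* − c, x⟩/‖x* − c‖ + ⟨b, x⟩ = 0. -/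
/-! Away from `c` the functional is Fréchet differentiable, with gradient
`x + (ε / ‖x - c‖) • (x - c) + b`, the middle term coming from `∇‖y‖ = y / ‖y‖` for `y ≠ 0`.
A global minimiser is a local one, so by Fermat's rule this gradient vanishes at `xstar`;
pairing it with `x` gives the identity. -/

open RealInnerProductSpace

section NormDerivative

variable {E : Type*} [NormedAddCommGroup E] [InnerProductSpace ℝ E]

theorem hasFDerivAt_norm_of_ne_zero {y : E} (hy : y ≠ 0) :
    HasFDerivAt (‖·‖) (‖y‖⁻¹ • innerSL ℝ y) y := by
  have hsqrt := (hasStrictFDerivAt_norm_sq y).hasFDerivAt.sqrt (by positivity)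
  simp only [Real.sqrt_sq (norm_nonneg _)] at hsqrt
  convert hsqrt using 1
  ext v
  simp
  field_simp

theorem hasFDerivAt_half_norm_sq_add_smul_norm_sub_add_inner (ε : ℝ) (b c : E) {x : E}
    (hx : x ≠ c) :
    HasFDerivAt (fun z : E => (1 / 2) * ‖z‖ ^ 2 + ε * ‖z - c‖ + ⟪b, z⟫)
      (innerSL ℝ (x + (ε / ‖x - c‖) • (x - c) + b)) x := by
  have hsq := (hasStrictFDerivAt_norm_sq x).hasFDerivAt.const_mul (1 / 2 : ℝ)
  have hdist := ((hasFDerivAt_norm_of_ne_zero (sub_ne_zero.2 hx)).comp x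
    ((hasFDerivAt_id x).sub_const c)).const_mul ε
  refine ((hsq.add hdist).add (innerSL ℝ b).hasFDerivAt).congr_fderiv ?_
  ext v
  simp
  ring

end NormDerivative

theorem stmt19_general {K : Type*} [NormedAddCommGroup K] [InnerProductSpace ℝ K]
    (ε : ℝ) (b c xstar : K)
    (hmin : ∀ x : K,
      (1 / 2) * ‖xstar‖ ^ 2 + ε * ‖xstar - c‖ + ⟪b, xstar⟫
        ≤ (1 / 2) * ‖x‖ ^ 2 + ε * ‖x - c‖ + ⟪b, x⟫)
    (hne : xstar ≠ c) :
    ∀ x : K, ⟪xstar, x⟫ + ε * ⟪xstar - c, x⟫ / ‖xstar - c‖ + ⟪b, x⟫ = 0 := by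
  intro x
  have hgrad := IsLocalMin.hasFDerivAt_eq_zero (Filter.Eventually.of_forall hmin)
    (hasFDerivAt_half_norm_sq_add_smul_norm_sub_add_inner ε b c hne)
  have hx : ⟪xstar + (ε / ‖xstar - c‖) • (xstar - c) + b, x⟫ = 0 := by
    exact DFunLike.congr_fun hgrad x
  rw [inner_add_left, inner_add_left, real_inner_smul_left] at hx
  rw [← hx]
  ring

theorem stmt19 {K : Type*} [NormedAddCommGroup K] [InnerProductSpace ℝ K]
    (ε : ℝ) (hε : 0 < ε) (b c xstar : K)
    (hmin : ∀ x : K,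
      (1 / 2) * ‖xstar‖ ^ 2 + ε * ‖xstar - c‖ + ⟪b, xstar⟫
        ≤ (1 / 2) * ‖x‖ ^ 2 + ε * ‖x - c‖ + ⟪b, x⟫)
    (hne : xstar ≠ c) :
    ∀ x : K, ⟪xstar, x⟫ + ε * ⟪xstar - c, x⟫ / ‖xstar - c‖ + ⟪b, x⟫ = 0 :=
  stmt19_general ε b c xstar hmin hne
end
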